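/- arXiv:0906.2497 — 2 statements merged into one kernel-verified Lean document; each statement's English description precedes it below -/
import Mathlib

section
/- Every line L in ℝ³ that meets each of the three tangent lines ℓ(−1), ℓ(0), ℓ(1) (i.e. has nonempty intersection with each) is contained in the quadric Q. -/
/-!
The three tangent lines `ℓ(-1)`, `ℓ(0)`, `ℓ(1)` lie on `Q` and are pairwise disjoint, so a line
meeting all three meets `Q` in three distinct points. Along a line `p + u • v`, the equation of
`Q` is a polynomial of degree at most two in `u`; having three roots, it vanishes identically.
-/

/-- The curve γ(t) = (6t² − 1, (7/2)t³ + (3/2)t, −(1/2)t³ + (3/2)t). -/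
noncomputable def gamma (t : ℝ) : Fin 3 → ℝ :=
  ![6 * t ^ 2 - 1, 7 / 2 * t ^ 3 + 3 / 2 * t, -(1 / 2) * t ^ 3 + 3 / 2 * t]

/-- The derivative γ′(t) = (12t, (21/2)t² + 3/2, −(3/2)t² + 3/2). -/
noncomputable def gamma' (t : ℝ) : Fin 3 → ℝ :=
  ![12 * t, 21 / 2 * t ^ 2 + 3 / 2, -(3 / 2) * t ^ 2 + 3 / 2]

/-- The quadric Q = {(x,y,z) : x² − y² + z² = 1}. -/
def Quadric : Set (Fin 3 → ℝ) := {p | (p 0) ^ 2 - (p 1) ^ 2 + (p 2) ^ 2 = 1}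

/-- The tangent line ℓ(t) = {γ(t) + u·γ′(t) : u ∈ ℝ}. -/
noncomputable def tangentLine (t : ℝ) : Set (Fin 3 → ℝ) :=
  {x | ∃ u : ℝ, x = gamma t + u • gamma' t}

/-- The line {p + u·v : u ∈ ℝ} through p with direction v. -/
def lineThrough (p v : Fin 3 → ℝ) : Set (Fin 3 → ℝ) :=
  {x | ∃ u : ℝ, x = p + u • v}

theorem quadratic_coeffs_eq_zero_of_three_roots {R : Type*} [CommRing R] [NoZeroDivisors R] {a b c x y z : R}
    (hxy : x ≠ y) (hxz : x ≠ z) (hyz : y ≠ z)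
    (hx : a * x ^ 2 + b * x + c = 0) (hy : a * y ^ 2 + b * y + c = 0)
    (hz : a * z ^ 2 + b * z + c = 0) :
    a = 0 ∧ b = 0 ∧ c = 0 := by
  have hxy' : a * (x + y) + b = 0 := by
    refine (mul_eq_zero.mp ?_).resolve_left (sub_ne_zero.mpr hxy)
    linear_combination hx - hy
  have hxz' : a * (x + z) + b = 0 := by
    refine (mul_eq_zero.mp ?_).resolve_left (sub_ne_zero.mpr hxz)
    linear_combination hx - hz
  have ha : a = 0 := by
    refine (mul_eq_zero.mp ?_).resolve_right (sub_ne_zero.mpr hyz)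
    linear_combination hxy' - hxz'
  have hb : b = 0 := by linear_combination hxy' - (x + y) * ha
  exact ⟨ha, hb, by linear_combination hx - x ^ 2 * ha - x * hb⟩

theorem add_smul_mem_quadric_iff (p v : Fin 3 → ℝ) (u : ℝ) :
    p + u • v ∈ Quadric ↔
      (v 0 ^ 2 - v 1 ^ 2 + v 2 ^ 2) * u ^ 2 + 2 * (p 0 * v 0 - p 1 * v 1 + p 2 * v 2) * u
        + (p 0 ^ 2 - p 1 ^ 2 + p 2 ^ 2 - 1) = 0 := by
  simp only [Quadric, Set.mem_ofPred_eq, Pi.add_apply, Pi.smul_apply, smul_eq_mul]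
  constructor <;> intro h <;> linear_combination h

theorem lineThrough_subset_quadric_of_three_points {p v a b c : Fin 3 → ℝ}
    (haL : a ∈ lineThrough p v) (hbL : b ∈ lineThrough p v) (hcL : c ∈ lineThrough p v)
    (haQ : a ∈ Quadric) (hbQ : b ∈ Quadric) (hcQ : c ∈ Quadric)
    (hab : a ≠ b) (hac : a ≠ c) (hbc : b ≠ c) :
    lineThrough p v ⊆ Quadric := by
  obtain ⟨x, rfl⟩ := haL
  obtain ⟨y, rfl⟩ := hbL
  obtain ⟨z, rfl⟩ := hcL
  rw [add_smul_mem_quadric_iff] at haQ hbQ hcQ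
  obtain ⟨hA, hB, hC⟩ := quadratic_coeffs_eq_zero_of_three_roots
    (fun h ↦ hab (by rw [h])) (fun h ↦ hac (by rw [h])) (fun h ↦ hbc (by rw [h])) haQ hbQ hcQ
  rintro _ ⟨u, rfl⟩
  rw [add_smul_mem_quadric_iff, hA, hB, hC]
  ring

theorem tangentLine_subset_quadric {t : ℝ} (ht : t ∈ ({-1, 0, 1} : Set ℝ)) :
    tangentLine t ⊆ Quadric := by
  rintro _ ⟨u, rfl⟩
  rw [add_smul_mem_quadric_iff]
  rcases ht with rfl | rfl | rfl <;> simp [gamma, gamma'] <;> ring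

theorem tangentLine_pairwiseDisjoint : ({-1, 0, 1} : Set ℝ).PairwiseDisjoint tangentLine := by
  intro s hs t ht hst
  rw [Function.onFun, Set.disjoint_left]
  rintro _ ⟨u, rfl⟩ ⟨w, hw⟩
  have h0 := congrFun hw 0
  have h1 := congrFun hw 1
  have h2 := congrFun hw 2
  rcases hs with rfl | rfl | rfl <;> rcases ht with rfl | rfl | rfl
  all_goals simp [gamma, gamma'] at h0 h1 h2 hst
  all_goals linarith

theorem stmt_3_general (p v : Fin 3 → ℝ)
    (h₁ : (lineThrough p v ∩ tangentLine (-1)).Nonempty)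
    (h₂ : (lineThrough p v ∩ tangentLine 0).Nonempty)
    (h₃ : (lineThrough p v ∩ tangentLine 1).Nonempty) :
    lineThrough p v ⊆ Quadric := by
  obtain ⟨a, haL, ha⟩ := h₁
  obtain ⟨b, hbL, hb⟩ := h₂
  obtain ⟨c, hcL, hc⟩ := h₃
  have hdisj := tangentLine_pairwiseDisjoint
  exact lineThrough_subset_quadric_of_three_points haL hbL hcL
    (tangentLine_subset_quadric (by simp) ha) (tangentLine_subset_quadric (by simp) hb)
    (tangentLine_subset_quadric (by simp) hc)
    ((hdisj (by simp) (by simp) (by norm_num)).ne_of_mem ha hb)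
    ((hdisj (by simp) (by simp) (by norm_num)).ne_of_mem ha hc)
    ((hdisj (by simp) (by simp) (by norm_num)).ne_of_mem hb hc)

/-- Every line in ℝ³ meeting each of the tangent lines ℓ(−1), ℓ(0), ℓ(1)
is contained in the quadric Q. -/
theorem stmt_3 (p v : Fin 3 → ℝ) (hv : v ≠ 0)
    (h₁ : (lineThrough p v ∩ tangentLine (-1)).Nonempty)
    (h₂ : (lineThrough p v ∩ tangentLine 0).Nonempty)
    (h₃ : (lineThrough p v ∩ tangentLine 1).Nonempty) :
    lineThrough p v ⊆ Quadric :=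
  stmt_3_general p v h₁ h₂ h₃
end

section
/- For every s ∈ (0,1), the tangent line ℓ(s) meets the quadric Q in exactly two points; that is, the set ℓ(s) ∩ Q has exactly two elements. -/
theorem ncard_setOf_quadratic_eq_zero {K : Type*} [Field K] [NeZero (2 : K)] {a b c d : K}
    (ha : a ≠ 0) (hd : discrim a b c = d * d) (hd0 : d ≠ 0) :
    {x : K | a * (x * x) + b * x + c = 0}.ncard = 2 := by
  have hroots : {x : K | a * (x * x) + b * x + c = 0} =
      {(-b + d) / (2 * a), (-b - d) / (2 * a)} := by
    ext x
    exact quadratic_eq_zero_iff ha hd x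
  rw [hroots, Set.ncard_pair]
  intro h
  rw [div_left_inj' (mul_ne_zero two_ne_zero ha)] at h
  have h2d : (2 : K) * d = 0 := by linear_combination h
  exact hd0 ((mul_eq_zero.mp h2d).resolve_left two_ne_zero)

theorem ncard_line_inter {K E : Type*} [DivisionRing K] [AddCommGroup E] [Module K E] {v : E}
    (hv : v ≠ 0) (p : E) (S : Set E) :
    ({x | ∃ u : K, x = p + u • v} ∩ S).ncard = {u : K | p + u • v ∈ S}.ncard := by
  have hinj : Function.Injective fun u : K ↦ p + u • v :=
    (add_right_injective p).comp (smul_left_injective K hv)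
  rw [← Set.ncard_image_of_injective _ hinj]
  congr 1
  ext x
  constructor
  · rintro ⟨⟨u, rfl⟩, hx⟩
    exact ⟨u, hx, rfl⟩
  · rintro ⟨u, hu, rfl⟩
    exact ⟨⟨u, rfl⟩, hu⟩

theorem gamma'_ne_zero (s : ℝ) : gamma' s ≠ 0 := by
  intro h
  have h1 := congrFun h 1
  simp only [gamma', Matrix.cons_val_one, Matrix.cons_val_zero, Pi.zero_apply] at h1
  nlinarith [sq_nonneg s]

theorem gamma_add_smul_gamma'_mem_quadric_iff (s u : ℝ) :
    gamma s + u • gamma' s ∈ Quadric ↔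
      108 * s ^ 2 * (1 - s ^ 2) * (u * u) + 24 * s * (3 * s ^ 2 - 1) * (1 - s ^ 2) * u
        + -12 * s ^ 2 * (1 - s ^ 2) ^ 2 = 0 := by
  simp only [Quadric, Set.mem_ofPred_eq, Pi.add_apply, Pi.smul_apply, smul_eq_mul, gamma, gamma',
    Matrix.cons_val_zero, Matrix.cons_val_one, Matrix.cons_val_two, Matrix.head_cons,
    Matrix.tail_cons]
  constructor <;> intro h <;> linear_combination h

theorem discrim_tangentLine_quadric (s : ℝ) :
    discrim (108 * s ^ 2 * (1 - s ^ 2)) (24 * s * (3 * s ^ 2 - 1) * (1 - s ^ 2))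
        (-12 * s ^ 2 * (1 - s ^ 2) ^ 2) =
      (24 * s * (1 - s ^ 2) * √(3 * s ^ 2 + 1)) * (24 * s * (1 - s ^ 2) * √(3 * s ^ 2 + 1)) := by
  have hsqrt : √(3 * s ^ 2 + 1) * √(3 * s ^ 2 + 1) = 3 * s ^ 2 + 1 :=
    Real.mul_self_sqrt (by positivity)
  rw [discrim]
  linear_combination (-(24 * s * (1 - s ^ 2)) ^ 2) * hsqrt

/-- For every s ∈ (0,1), the tangent line ℓ(s) meets the quadric Q in exactly
two points. -/
theorem stmt_5 (s : ℝ) (hs : s ∈ Set.Ioo (0 : ℝ) 1) :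
    (tangentLine s ∩ Quadric).ncard = 2 := by
  obtain ⟨hs0, hs1⟩ := hs
  have hs2 : 1 - s ^ 2 ≠ 0 := by nlinarith
  rw [tangentLine, ncard_line_inter (gamma'_ne_zero s)]
  simp_rw [gamma_add_smul_gamma'_mem_quadric_iff]
  exact ncard_setOf_quadratic_eq_zero (by positivity) (discrim_tangentLine_quadric s)
    (by positivity)
end
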